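/- arXiv:1802.04982 — 3 statements merged into one kernel-verified Lean document; each statement's English description precedes it below -/
import Mathlib

section
/- Let F and G be RQFO formulas, let d_{p₁},…,d_{p_m} be the definer predicates introduced in forming DEF(F) and e_{q₁},…,e_{q_n} those introduced in forming DEF(¬G), all pairwise distinct and fresh. Let H be a formula in which none of these definer predicates occurs. Then the following statements are equivalent: (1) F ⊨ H and H ⊨ G; (2) ∃d_{p₁} … ∃d_{p_m} DEF(F) ⊨ H and H ⊨ ¬∃e_{q₁} … ∃e_{q_n} DEF(¬G), where the second-order existential quantifiers are interpreted semantically via expansions of structures; (3) DEF(F) ⊨ H and H ⊨ ¬DEF(¬G). -/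
namespace CTI

/-- Terms of first-order logic: variables and function applications.
Function symbols with empty argument lists play the role of constants. -/
inductive Tm : Type where
  | var : ℕ → Tm
  | fn  : ℕ → List Tm → Tm

/-- The variables occurring in a term. -/
def Tm.vars : Tm → List ℕ
  | .var x => [x]
  | .fn _ ts => (ts.attach.map (fun t => Tm.vars t.1)).flatten
decreasing_by
  have h := List.sizeOf_lt_of_mem t.2; simp_wf; omega

/-- The function symbols occurring in a term. -/
def Tm.funs : Tm → List ℕ
  | .var _ => []
  | .fn f ts => f :: (ts.attach.map (fun t => Tm.funs t.1)).flatten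
decreasing_by
  have h := List.sizeOf_lt_of_mem t.2; simp_wf; omega

/-- A term is ground iff it contains no variables. -/
def Tm.ground (t : Tm) : Prop := t.vars = []

/-- An interpretation (structure) over domain `D`. -/
structure Interp (D : Type) where
  fn : ℕ → List D → D
  pr : ℕ → List D → Prop

/-- Evaluation of a term under an interpretation and a variable assignment. -/
def Tm.eval {D : Type} (I : Interp D) (a : ℕ → D) : Tm → D
  | .var x => a x
  | .fn f ts => I.fn f (ts.attach.map (fun t => Tm.eval I a t.1))
decreasing_by
  have h := List.sizeOf_lt_of_mem t.2; simp_wf; omega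

/-- Formulas of first-order logic without equality. -/
inductive Fml : Type where
  | tru : Fml
  | fls : Fml
  | atom : ℕ → List Tm → Fml
  | neg : Fml → Fml
  | and : Fml → Fml → Fml
  | or : Fml → Fml → Fml
  | all : ℕ → Fml → Fml
  | ex : ℕ → Fml → Fml

/-- Satisfaction of a formula under an interpretation and an assignment. -/
def Fml.holds {D : Type} (I : Interp D) : (ℕ → D) → Fml → Prop
  | _, .tru => True
  | _, .fls => False
  | a, .atom p ts => I.pr p (ts.map (Tm.eval I a))
  | a, .neg F => ¬ Fml.holds I a F
  | a, .and F G => Fml.holds I a F ∧ Fml.holds I a G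
  | a, .or F G => Fml.holds I a F ∨ Fml.holds I a G
  | a, .all x F => ∀ d : D, Fml.holds I (Function.update a x d) F
  | a, .ex x F => ∃ d : D, Fml.holds I (Function.update a x d) F

/-- Semantic entailment: every structure (with nonempty domain) and assignment
satisfying `F` satisfies `G`. -/
def Entails (F G : Fml) : Prop :=
  ∀ (D : Type) (_ : Nonempty D) (I : Interp D) (a : ℕ → D), F.holds I a → G.holds I a

/-- Semantic equivalence. -/
def EquivF (F G : Fml) : Prop := Entails F G ∧ Entails G F

/-- The atoms occurring in a formula, together with a polarity, relative to
the polarity `pol` of the context (`true` = positive). -/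
def Fml.litsP : Bool → Fml → Set (Bool × ℕ × List Tm)
  | _, .tru => ∅
  | _, .fls => ∅
  | pol, .atom p ts => {(pol, p, ts)}
  | pol, .neg F => Fml.litsP (!pol) F
  | pol, .and F G => Fml.litsP pol F ∪ Fml.litsP pol G
  | pol, .or F G => Fml.litsP pol F ∪ Fml.litsP pol G
  | pol, .all _ F => Fml.litsP pol F
  | pol, .ex _ F => Fml.litsP pol F

/-- lit(F): the set of pairs of an atom together with a polarity such that
the atom occurs in `F` with that polarity. -/
def Fml.lits (F : Fml) : Set (Bool × ℕ × List Tm) := Fml.litsP true F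

/-- pred(F): predicates together with polarities of their occurrences. -/
def Fml.preds (F : Fml) : Set (Bool × ℕ) := {bp | ∃ ts, (bp.1, bp.2, ts) ∈ F.lits}

/-- The predicate symbols occurring in a formula (irrespective of polarity). -/
def Fml.predSyms (F : Fml) : Set ℕ := {p | ∃ b ts, (b, p, ts) ∈ F.lits}

/-- fun(F): the function symbols (including constants) occurring in `F`. -/
def Fml.funs : Fml → Set ℕ
  | .tru => ∅
  | .fls => ∅
  | .atom _ ts => {f | ∃ t ∈ ts, f ∈ Tm.funs t}
  | .neg F => F.funs
  | .and F G => F.funs ∪ G.funs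
  | .or F G => F.funs ∪ G.funs
  | .all _ F => F.funs
  | .ex _ F => F.funs

/-- The free variables of a formula. -/
def Fml.fv : Fml → Set ℕ
  | .tru => ∅
  | .fls => ∅
  | .atom _ ts => {x | ∃ t ∈ ts, x ∈ Tm.vars t}
  | .neg F => F.fv
  | .and F G => F.fv ∪ G.fv
  | .or F G => F.fv ∪ G.fv
  | .all x F => F.fv \ {x}
  | .ex x F => F.fv \ {x}

/-- The variables occurring bound in a formula. -/
def Fml.bv : Fml → Set ℕ
  | .tru => ∅
  | .fls => ∅
  | .atom _ _ => ∅
  | .neg F => F.bv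
  | .and F G => F.bv ∪ G.bv
  | .or F G => F.bv ∪ G.bv
  | .all x F => insert x F.bv
  | .ex x F => insert x F.bv

/-- All variables occurring in a formula (free or bound). -/
def Fml.varsSet : Fml → Set ℕ
  | .tru => ∅
  | .fls => ∅
  | .atom _ ts => {x | ∃ t ∈ ts, x ∈ Tm.vars t}
  | .neg F => F.varsSet
  | .and F G => F.varsSet ∪ G.varsSet
  | .or F G => F.varsSet ∪ G.varsSet
  | .all x F => insert x F.varsSet
  | .ex x F => insert x F.varsSet

/-- Quantifier-free formulas. -/
def Fml.qfree : Fml → Prop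
  | .tru => True
  | .fls => True
  | .atom _ _ => True
  | .neg F => F.qfree
  | .and F G => F.qfree ∧ G.qfree
  | .or F G => F.qfree ∧ G.qfree
  | .all _ _ => False
  | .ex _ _ => False

/-- Ground formulas: quantifier-free and without variables. -/
def Fml.isGround : Fml → Prop
  | .tru => True
  | .fls => True
  | .atom _ ts => ∀ t ∈ ts, Tm.vars t = []
  | .neg F => F.isGround
  | .and F G => F.isGround ∧ G.isGround
  | .or F G => F.isGround ∧ G.isGround
  | .all _ _ => False
  | .ex _ _ => False

end CTI

namespace CTI

/-- A relational atom: predicate symbol with argument list. -/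
abbrev Atom := ℕ × List Tm

/-- RQFO formulas: first-order formulas with relativized quantifiers.
`all vs R F` stands for ∀vs (¬R ∨ F) and `ex vs R F` for ∃vs (R ∧ F). -/
inductive RQ : Type where
  | tru : RQ
  | fls : RQ
  | and : RQ → RQ → RQ
  | or : RQ → RQ → RQ
  | all : List ℕ → Atom → RQ → RQ
  | ex : List ℕ → Atom → RQ → RQ

/-- Well-formedness of a relativized quantification: the atom is relational
(arguments are variables or constants) and all quantified variables occur in it. -/
def atomOK (vs : List ℕ) (R : Atom) : Prop :=
  (∀ t ∈ R.2, (∃ x, t = Tm.var x) ∨ (∃ c, t = Tm.fn c [])) ∧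
  ∀ v ∈ vs, Tm.var v ∈ R.2

/-- Well-formedness of RQFO formulas. -/
def RQ.wf : RQ → Prop
  | .tru => True
  | .fls => True
  | .and F G => F.wf ∧ G.wf
  | .or F G => F.wf ∧ G.wf
  | .all vs R F => atomOK vs R ∧ F.wf
  | .ex vs R F => atomOK vs R ∧ F.wf

/-- Universal quantification upon a list of variables. -/
def allN (xs : List ℕ) (F : Fml) : Fml := xs.foldr .all F

/-- Existential quantification upon a list of variables. -/
def exN (xs : List ℕ) (F : Fml) : Fml := xs.foldr .ex F

/-- The first-order formula denoted by an RQFO formula. -/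
def RQ.toFml : RQ → Fml
  | .tru => .tru
  | .fls => .fls
  | .and F G => .and F.toFml G.toFml
  | .or F G => .or F.toFml G.toFml
  | .all vs R F => allN vs (.or (.neg (.atom R.1 R.2)) F.toFml)
  | .ex vs R F => exN vs (.and (.atom R.1 R.2) F.toFml)

/-- The free variables of an RQFO formula. -/
def RQ.fv : RQ → Finset ℕ
  | .tru => ∅
  | .fls => ∅
  | .and F G => F.fv ∪ G.fv
  | .or F G => F.fv ∪ G.fv
  | .all vs R F => ((R.2.map Tm.vars).flatten.toFinset ∪ F.fv) \ vs.toFinset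
  | .ex vs R F => ((R.2.map Tm.vars).flatten.toFinset ∪ F.fv) \ vs.toFinset

/-- x̄: the free variables of an RQFO formula in the standard order. -/
def xbar (X : RQ) : List ℕ := X.fv.sort (· ≤ ·)

/-- The positions of an RQFO formula (relativizing atoms counted as part of
their quantification). -/
def RQ.posL : RQ → List (List ℕ)
  | .tru => [[]]
  | .fls => [[]]
  | .and F G => [] :: (F.posL.map (fun q => 1 :: q) ++ G.posL.map (fun q => 2 :: q))
  | .or F G => [] :: (F.posL.map (fun q => 1 :: q) ++ G.posL.map (fun q => 2 :: q))
  | .all _ _ F => [] :: F.posL.map (fun q => 1 :: q)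
  | .ex _ _ F => [] :: F.posL.map (fun q => 1 :: q)

/-- D_p: the definer atom for position `p` and subformula `X`, with the
definer predicate `d p` applied to the free variables of `X`. -/
def Dat (d : List ℕ → ℕ) (p : List ℕ) (X : RQ) : Fml :=
  .atom (d p) ((xbar X).map .var)

/-- Implication, encoded. -/
def impF (A B : Fml) : Fml := .or (.neg A) B

/-- The conjunction of the formulas def_q for all positions `q` of the given
RQFO formula, which is located at absolute position `p`. -/
def RQ.defs (d : List ℕ → ℕ) : RQ → List ℕ → Fml
  | .tru, p => impF (Dat d p .tru) .tru
  | .fls, p => impF (Dat d p .fls) .fls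
  | .and F G, p =>
      .and (allN (xbar (.and F G))
        (impF (Dat d p (.and F G)) (.and (Dat d (p ++ [1]) F) (Dat d (p ++ [2]) G))))
      (.and (RQ.defs d F (p ++ [1])) (RQ.defs d G (p ++ [2])))
  | .or F G, p =>
      .and (allN (xbar (.or F G))
        (impF (Dat d p (.or F G)) (.or (Dat d (p ++ [1]) F) (Dat d (p ++ [2]) G))))
      (.and (RQ.defs d F (p ++ [1])) (RQ.defs d G (p ++ [2])))
  | .all vs R F, p =>
      .and (allN (xbar (.all vs R F))
        (impF (Dat d p (.all vs R F))
          (allN vs (.or (.neg (.atom R.1 R.2)) (Dat d (p ++ [1]) F)))))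
      (RQ.defs d F (p ++ [1]))
  | .ex vs R F, p =>
      .and (allN (xbar (.ex vs R F))
        (impF (Dat d p (.ex vs R F))
          (exN vs (.and (.atom R.1 R.2) (Dat d (p ++ [1]) F)))))
      (RQ.defs d F (p ++ [1]))

/-- DEF(F): the definitional (structure-preserving) form of an RQFO formula,
with definer predicates given by `d`. -/
def DEF (d : List ℕ → ℕ) (F : RQ) : Fml := .and (Dat d [] F) (RQ.defs d F [])

/-- Negation of an RQFO formula, with negation propagated inward. -/
def RQ.negR : RQ → RQ
  | .tru => .fls
  | .fls => .tru
  | .and F G => .or F.negR G.negR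
  | .or F G => .and F.negR G.negR
  | .all vs R F => .ex vs R F.negR
  | .ex vs R F => .all vs R F.negR

/-- `I` and `I'` agree on all function symbols outside `Sf` and all predicate
symbols outside `Sp`. -/
def AgreeExcept {D : Type} (Sf Sp : Set ℕ) (I I' : Interp D) : Prop :=
  (∀ f, f ∉ Sf → I.fn f = I'.fn f) ∧ (∀ p, p ∉ Sp → I.pr p = I'.pr p)

end CTI

/-!
`DEF(X)` entails `X`: by induction on positions, in any model of `DEF(X)` the definer
atom `D_p` implies the subformula `X|p`. Conversely, every model of `X` expands to a model
of `DEF(X)` by interpreting each definer `d_p` as `X|p`; as the definers are pairwise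
distinct and fresh, the expansion changes nothing else. Hence `∃ d̄ DEF(X)` is equivalent
to `X`, and for definer-free `H`, `DEF(X) ⊨ H` iff `X ⊨ H`. Applying this to `F`, and to
`¬G` with `H ⊨ G` iff `¬G ⊨ ¬H`, gives both equivalences.
-/

namespace CTI

variable {D : Type}

theorem Tm.eval_congr {I I' : Interp D} (hfn : I.fn = I'.fn) :
    ∀ (t : Tm) {a b : ℕ → D}, (∀ x ∈ t.vars, a x = b x) → t.eval I a = t.eval I' b := by
  intro t
  induction t using Tm.vars.induct with
  | case1 x => intro a b h; simpa [Tm.eval, Tm.vars] using h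
  | case2 f ts ih =>
    intro a b h
    rw [Tm.eval, Tm.eval, hfn]
    congr 1
    refine List.map_congr_left fun t _ => ih t fun x hx => h x ?_
    simp only [Tm.vars, List.mem_flatten, List.mem_map]
    exact ⟨_, ⟨t, List.mem_attach _ _, rfl⟩, hx⟩

def Fml.usesPred (r : ℕ) : Fml → Prop
  | .tru => False
  | .fls => False
  | .atom p _ => p = r
  | .neg F => F.usesPred r
  | .and F G => F.usesPred r ∨ G.usesPred r
  | .or F G => F.usesPred r ∨ G.usesPred r
  | .all _ F => F.usesPred r
  | .ex _ F => F.usesPred r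

theorem Fml.exists_mem_litsP_iff (r : ℕ) (F : Fml) (pol : Bool) :
    (∃ b ts, (b, r, ts) ∈ F.litsP pol) ↔ F.usesPred r := by
  induction F generalizing pol with
  | tru | fls => simp [Fml.litsP, Fml.usesPred]
  | atom p ts => simp [Fml.litsP, Fml.usesPred, eq_comm]
  | neg F ih => exact ih !pol
  | and F G ihF ihG | or F G ihF ihG =>
    simp only [Fml.litsP, Fml.usesPred, Set.mem_union, exists_or, ← ihF pol, ← ihG pol]
  | all x F ih | ex x F ih => exact ih pol

theorem Fml.mem_predSyms_iff {r : ℕ} {F : Fml} : r ∈ F.predSyms ↔ F.usesPred r :=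
  F.exists_mem_litsP_iff r true

theorem Fml.holds_congr {I I' : Interp D} (hfn : I.fn = I'.fn) :
    ∀ (F : Fml) {a b : ℕ → D}, (∀ r, F.usesPred r → I.pr r = I'.pr r) →
      (∀ x ∈ F.fv, a x = b x) → (F.holds I a ↔ F.holds I' b) := by
  have update_agree : ∀ {s : Set ℕ} {a b : ℕ → D} (x : ℕ) (c : D),
      (∀ y ∈ s \ {x}, a y = b y) →
        ∀ y ∈ s, Function.update a x c y = Function.update b x c y := by
    intro s a b x c h y hy
    rcases eq_or_ne y x with rfl | hne
    · simp
    · simp [Function.update_of_ne hne, h y ⟨hy, hne⟩]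
  intro F
  induction F with
  | tru | fls => simp [Fml.holds]
  | atom p ts =>
    intro a b hpr hab
    simp only [Fml.holds]
    rw [hpr p rfl,
      List.map_congr_left fun t ht => Tm.eval_congr hfn t fun x hx => hab x ⟨t, ht, hx⟩]
  | neg F ih => intro a b hpr hab; exact not_congr (ih hpr hab)
  | and F G ihF ihG | or F G ihF ihG =>
    intro a b hpr hab
    simp only [Fml.holds]
    rw [ihF (fun r hr => hpr r (.inl hr)) (fun x hx => hab x (.inl hx)),
      ihG (fun r hr => hpr r (.inr hr)) (fun x hx => hab x (.inr hx))]
  | all x F ih => intro a b hpr hab; exact forall_congr' fun c => ih hpr (update_agree x c hab)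
  | ex x F ih => intro a b hpr hab; exact exists_congr fun c => ih hpr (update_agree x c hab)

theorem Fml.holds_congr_assignment {I : Interp D} (F : Fml) {a b : ℕ → D}
    (hab : ∀ x ∈ F.fv, a x = b x) : F.holds I a ↔ F.holds I b :=
  F.holds_congr rfl (fun _ _ => rfl) hab

theorem Fml.holds_iff_of_agreeExcept {S : Set ℕ} {I I' : Interp D} (h : AgreeExcept ∅ S I I')
    {F : Fml} (hF : ∀ r ∈ S, r ∉ F.predSyms) (a : ℕ → D) : F.holds I a ↔ F.holds I' a :=
  F.holds_congr (funext fun f => h.1 f (Set.notMem_empty f))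
    (fun r hr => h.2 r fun hS => hF r hS (Fml.mem_predSyms_iff.mpr hr)) fun _ _ => rfl

theorem holds_allN {I : Interp D} {F : Fml} :
    ∀ {xs : List ℕ} {a : ℕ → D},
      (allN xs F).holds I a ↔ ∀ b : ℕ → D, (∀ y, y ∉ xs → b y = a y) → F.holds I b
  | [], a =>
    ⟨fun h b hb => (funext fun y => hb y List.not_mem_nil) ▸ h, fun h => h a fun _ _ => rfl⟩
  | x :: xs, a => by
    show (∀ c, (allN xs F).holds I (Function.update a x c)) ↔ _
    simp only [holds_allN]
    constructor
    · intro h b hb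
      refine h (b x) b fun y hy => ?_
      rcases eq_or_ne y x with rfl | hne
      · simp
      · simpa [Function.update_of_ne hne] using hb y (by simp [hy, hne])
    · intro h c b hb
      refine h b fun y hy => ?_
      simp only [List.mem_cons, not_or] at hy
      rw [hb y hy.2, Function.update_of_ne hy.1]

theorem holds_exN_iff_not_holds_allN_neg {I : Interp D} {F : Fml} :
    ∀ {xs : List ℕ} {a : ℕ → D}, (exN xs F).holds I a ↔ ¬ (allN xs (.neg F)).holds I a
  | [], _ => not_not.symm
  | x :: xs, a => by
    show (∃ c, (exN xs F).holds I (Function.update a x c)) ↔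
      ¬ ∀ c, (allN xs (.neg F)).holds I (Function.update a x c)
    simp only [holds_exN_iff_not_holds_allN_neg, not_forall]

theorem holds_exN {I : Interp D} {F : Fml} {xs : List ℕ} {a : ℕ → D} :
    (exN xs F).holds I a ↔
      ∃ b : ℕ → D, (∀ y, y ∉ xs → b y = a y) ∧ F.holds I b := by
  simp [holds_exN_iff_not_holds_allN_neg, holds_allN, Fml.holds]

theorem holds_allN_mono {I : Interp D} {F G : Fml} (h : ∀ b, F.holds I b → G.holds I b)
    {xs : List ℕ} {a : ℕ → D} : (allN xs F).holds I a → (allN xs G).holds I a := by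
  simp only [holds_allN]
  exact fun hF b hb => h b (hF b hb)

theorem holds_exN_mono {I : Interp D} {F G : Fml} (h : ∀ b, F.holds I b → G.holds I b)
    {xs : List ℕ} {a : ℕ → D} : (exN xs F).holds I a → (exN xs G).holds I a := by
  simp only [holds_exN]
  exact fun ⟨b, hb, hF⟩ => ⟨b, hb, h b hF⟩

theorem fv_allN (F : Fml) : ∀ xs : List ℕ, (allN xs F).fv = F.fv \ {y | y ∈ xs}
  | [] => by simp [allN]
  | x :: xs => by
    show (allN xs F).fv \ {x} = _
    rw [fv_allN F xs, Set.sdiff_sdiff]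
    congr 1
    ext; simp

theorem fv_exN (F : Fml) : ∀ xs : List ℕ, (exN xs F).fv = F.fv \ {y | y ∈ xs}
  | [] => by simp [exN]
  | x :: xs => by
    show (exN xs F).fv \ {x} = _
    rw [fv_exN F xs, Set.sdiff_sdiff]
    congr 1
    ext; simp

theorem usesPred_allN {F : Fml} {r : ℕ} (xs : List ℕ) :
    (allN xs F).usesPred r ↔ F.usesPred r := by
  induction xs with
  | nil => rfl
  | cons _ _ ih => exact ih

theorem usesPred_exN {F : Fml} {r : ℕ} (xs : List ℕ) :
    (exN xs F).usesPred r ↔ F.usesPred r := by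
  induction xs with
  | nil => rfl
  | cons _ _ ih => exact ih

theorem mem_xbar {x : ℕ} {X : RQ} : x ∈ xbar X ↔ x ∈ X.fv := Finset.mem_sort _

theorem RQ.fv_toFml_subset (X : RQ) : X.toFml.fv ⊆ X.fv := by
  induction X with
  | tru | fls => simp [RQ.toFml, Fml.fv]
  | and F G ihF ihG | or F G ihF ihG =>
    simpa [RQ.toFml, Fml.fv, RQ.fv] using Set.union_subset_union ihF ihG
  | all vs R F ih | ex vs R F ih =>
    intro x
    simp only [RQ.toFml, fv_allN, fv_exN, Fml.fv, RQ.fv]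
    simpa using fun h hx => ⟨h.imp_right (@ih x), hx⟩

theorem RQ.holds_negR {I : Interp D} (X : RQ) {a : ℕ → D} :
    X.negR.toFml.holds I a ↔ ¬ X.toFml.holds I a := by
  induction X generalizing a with
  | tru | fls => simp [RQ.negR, RQ.toFml, Fml.holds]
  | and F G ihF ihG | or F G ihF ihG =>
    simp only [RQ.negR, RQ.toFml, Fml.holds, ihF, ihG, not_or, not_and_or]
  | all vs R F ih | ex vs R F ih =>
    simp [RQ.negR, RQ.toFml, Fml.holds, holds_exN, holds_allN, ih, imp_iff_not_or]

theorem Fml.predSyms_neg (F : Fml) : (Fml.neg F).predSyms = F.predSyms :=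
  Set.ext fun _ =>
    (Fml.mem_predSyms_iff (F := F.neg)).trans (Fml.mem_predSyms_iff (F := F)).symm

theorem RQ.predSyms_negR (X : RQ) : X.negR.toFml.predSyms = X.toFml.predSyms := by
  ext r
  simp only [Fml.mem_predSyms_iff]
  induction X <;> simp [RQ.negR, RQ.toFml, Fml.usesPred, usesPred_allN, usesPred_exN, *]

theorem entails_neg_comm {A B : Fml} : Entails A (.neg B) ↔ Entails B (.neg A) :=
  ⟨fun h D hD I a hB hA => h D hD I a hA hB, fun h D hD I a hA hB => h D hD I a hB hA⟩

theorem entails_negR_neg_iff {X : RQ} {H : Fml} :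
    Entails X.negR.toFml (.neg H) ↔ Entails H X.toFml :=
  forall₄_congr fun _ _ _ _ => by simp only [Fml.holds, RQ.holds_negR, not_imp_not]

section DefinitionalForm

variable {J : Interp D} {d : List ℕ → ℕ}

theorem holds_Dat_congr {p : List ℕ} {Y : RQ} {b c : ℕ → D} (h : ∀ x ∈ Y.fv, b x = c x) :
    (Dat d p Y).holds J b ↔ (Dat d p Y).holds J c :=
  Fml.holds_congr_assignment _ fun x hx =>
    h x <| by simpa [Dat, Fml.fv, Tm.vars, mem_xbar] using hx

theorem holds_toFml_of_holds_clause {p : List ℕ} {Y : RQ} {Φ : Fml} {a b : ℕ → D}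
    (hcl : (allN (xbar Y) (impF (Dat d p Y) Φ)).holds J a)
    (hΦ : ∀ c, Φ.holds J c → Y.toFml.holds J c) (hD : (Dat d p Y).holds J b) :
    Y.toFml.holds J b := by
  let c : ℕ → D := fun x => if x ∈ xbar Y then b x else a x
  have hcb : ∀ x ∈ Y.fv, c x = b x := fun x hx => if_pos (mem_xbar.mpr hx)
  have himp := holds_allN.mp hcl c fun y hy => if_neg hy
  simp only [impF, Fml.holds] at himp
  have hY := hΦ c (himp.resolve_left (not_not.mpr ((holds_Dat_congr hcb).mpr hD)))
  exact (Fml.holds_congr_assignment _ fun x hx => hcb x (Y.fv_toFml_subset hx)).mp hY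

theorem RQ.holds_toFml_of_holds_defs (Y : RQ) {p : List ℕ} {a b : ℕ → D}
    (hdefs : (Y.defs d p).holds J a) (hD : (Dat d p Y).holds J b) : Y.toFml.holds J b := by
  induction Y generalizing p b with
  | tru => trivial
  | fls =>
    simp only [RQ.defs, impF, Fml.holds, or_false] at hdefs
    exact hdefs ((holds_Dat_congr (by simp [RQ.fv])).mp hD)
  | and F G ihF ihG =>
    exact holds_toFml_of_holds_clause hdefs.1
      (fun _ hc => ⟨ihF hdefs.2.1 hc.1, ihG hdefs.2.2 hc.2⟩) hD
  | or F G ihF ihG =>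
    exact holds_toFml_of_holds_clause hdefs.1
      (fun _ => Or.imp (ihF hdefs.2.1) (ihG hdefs.2.2)) hD
  | all vs R F ih =>
    exact holds_toFml_of_holds_clause hdefs.1
      (fun _ => holds_allN_mono fun _ => by exact Or.imp_right (ih hdefs.2)) hD
  | ex vs R F ih =>
    exact holds_toFml_of_holds_clause hdefs.1
      (fun _ => holds_exN_mono fun _ => by exact And.imp_right (ih hdefs.2)) hD

theorem entails_DEF (d : List ℕ → ℕ) (X : RQ) : Entails (DEF d X) X.toFml :=
  fun _ _ _ _ h => X.holds_toFml_of_holds_defs h.2 h.1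

def RQ.sub : RQ → List ℕ → RQ
  | X, [] => X
  | .and F G, i :: p => if i = 1 then F.sub p else G.sub p
  | .or F G, i :: p => if i = 1 then F.sub p else G.sub p
  | .all _ _ F, _ :: p => F.sub p
  | .ex _ _ F, _ :: p => F.sub p
  | X, _ :: _ => X

theorem RQ.usesPred_toFml_sub {r : ℕ} (X : RQ) :
    ∀ {q : List ℕ}, q ∈ X.posL → (X.sub q).toFml.usesPred r → X.toFml.usesPred r := by
  induction X with
  | tru | fls =>
    intro q hq h
    rw [List.mem_singleton.mp hq] at h
    exact h
  | and F G ihF ihG | or F G ihF ihG =>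
    intro q hq h
    simp only [RQ.posL, List.mem_cons, List.mem_append, List.mem_map] at hq
    rcases hq with rfl | ⟨q, hq, rfl⟩ | ⟨q, hq, rfl⟩
    · exact h
    · exact .inl (ihF hq (by simpa [RQ.sub] using h))
    · exact .inr (ihG hq (by simpa [RQ.sub] using h))
  | all vs R F ih | ex vs R F ih =>
    intro q hq h
    simp only [RQ.posL, List.mem_cons, List.mem_map] at hq
    rcases hq with rfl | ⟨q, hq, rfl⟩
    · exact h
    · simpa [RQ.toFml, usesPred_allN, usesPred_exN, Fml.usesPred] using .inr (ih hq h)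

theorem holds_impF {A B : Fml} {a : ℕ → D} :
    (impF A B).holds J a ↔ (A.holds J a → B.holds J a) :=
  imp_iff_not_or.symm

theorem holds_allN_of_forall {Φ : Fml} (h : ∀ b, Φ.holds J b) {xs : List ℕ} {a : ℕ → D} :
    (allN xs Φ).holds J a :=
  holds_allN.mpr fun b _ => h b

def DefinersFaithful (J : Interp D) (d : List ℕ → ℕ) (Y : RQ) (p : List ℕ) : Prop :=
  ∀ q ∈ Y.posL, ∀ b, (Dat d (p ++ q) (Y.sub q)).holds J b ↔ (Y.sub q).toFml.holds J b

namespace DefinersFaithful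

variable {Y : RQ} {p : List ℕ}

theorem root (h : DefinersFaithful J d Y p) (b : ℕ → D) :
    (Dat d p Y).holds J b ↔ Y.toFml.holds J b := by
  simpa [RQ.sub] using h [] (by cases Y <;> simp [RQ.posL]) b

theorem child {F : RQ} {i : ℕ} (h : DefinersFaithful J d Y p)
    (hpos : ∀ q ∈ F.posL, i :: q ∈ Y.posL) (hsub : ∀ q, Y.sub (i :: q) = F.sub q) :
    DefinersFaithful J d F (p ++ [i]) := fun q hq b => by
  simpa [hsub] using h (i :: q) (hpos q hq) b

end DefinersFaithful

theorem RQ.holds_defs_of_definersFaithful (Y : RQ) {p : List ℕ} (h : DefinersFaithful J d Y p)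
    (a : ℕ → D) : (Y.defs d p).holds J a := by
  induction Y generalizing p with
  | tru => exact Or.inr trivial
  | fls => exact Or.inl fun hD => (h.root a).mp hD
  | and F G ihF ihG | or F G ihF ihG =>
    have hF := h.child (F := F) (i := 1) (by simp [RQ.posL]) (by simp [RQ.sub])
    have hG := h.child (F := G) (i := 2) (by simp [RQ.posL]) (by simp [RQ.sub])
    refine ⟨holds_allN_of_forall fun b => holds_impF.mpr fun hD => ?_, ihF hF, ihG hG⟩
    exact ((h.root b).mp hD).imp (hF.root b).mpr (hG.root b).mpr
  | all vs R F ih =>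
    have hF := h.child (F := F) (i := 1) (by simp [RQ.posL]) (by simp [RQ.sub])
    refine ⟨holds_allN_of_forall fun b => holds_impF.mpr fun hD => ?_, ih hF⟩
    exact holds_allN_mono (fun c => by exact Or.imp_right (hF.root c).mpr) ((h.root b).mp hD)
  | ex vs R F ih =>
    have hF := h.child (F := F) (i := 1) (by simp [RQ.posL]) (by simp [RQ.sub])
    refine ⟨holds_allN_of_forall fun b => holds_impF.mpr fun hD => ?_, ih hF⟩
    exact holds_exN_mono (fun c => by exact And.imp_right (hF.root c).mpr) ((h.root b).mp hD)

theorem holds_DEF_of_definersFaithful {X : RQ} (h : DefinersFaithful J d X []) {a : ℕ → D}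
    (hX : X.toFml.holds J a) : (DEF d X).holds J a :=
  ⟨(h.root a).mpr hX, X.holds_defs_of_definersFaithful h a⟩

end DefinitionalForm

section Expansion

open Classical in
/-- The definer `d q` is read as the subformula `X.sub q`, its arguments giving the values of the
variables `xbar (X.sub q)`; `dflt` pads argument lists that are too short. -/
noncomputable def expand (I : Interp D) (X : RQ) (d : List ℕ → ℕ) (dflt : D) : Interp D where
  fn := I.fn
  pr r args :=
    if h : ∃ q ∈ X.posL, d q = r then
      (X.sub h.choose).toFml.holds I fun x => args.getD ((xbar (X.sub h.choose)).idxOf x) dflt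
    else I.pr r args

variable {I : Interp D} {X : RQ} {d : List ℕ → ℕ} {dflt : D}

theorem agreeExcept_expand :
    AgreeExcept ∅ {r | ∃ p ∈ X.posL, r = d p} I (expand I X d dflt) := by
  refine ⟨fun _ _ => rfl, fun r hr => funext fun args => ?_⟩
  have hr' : ¬ ∃ q ∈ X.posL, d q = r := fun ⟨q, hq, hqr⟩ => hr ⟨q, hq, hqr.symm⟩
  simp only [expand, dif_neg hr']

theorem holds_Dat_expand (hinj : ∀ p ∈ X.posL, ∀ q ∈ X.posL, d p = d q → p = q)
    {q : List ℕ} (hq : q ∈ X.posL) (b : ℕ → D) :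
    (Dat d q (X.sub q)).holds (expand I X d dflt) b ↔ (X.sub q).toFml.holds I b := by
  have hex : ∃ q' ∈ X.posL, d q' = d q := ⟨q, hq, rfl⟩
  have hchoose : hex.choose = q := hinj _ hex.choose_spec.1 q hq hex.choose_spec.2
  simp only [Dat, Fml.holds, expand, List.map_map]
  rw [dif_pos hex, hchoose]
  refine Fml.holds_congr_assignment _ fun x hx => ?_
  have hlen : (xbar (X.sub q)).idxOf x < (xbar (X.sub q)).length :=
    List.idxOf_lt_length_iff.mpr (mem_xbar.mpr ((X.sub q).fv_toFml_subset hx))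
  rw [List.getD_eq_getElem _ _ (by simpa using hlen), List.getElem_map, List.getElem_idxOf hlen]
  simp [Tm.eval]

theorem definersFaithful_expand (hinj : ∀ p ∈ X.posL, ∀ q ∈ X.posL, d p = d q → p = q)
    (hfresh : ∀ p ∈ X.posL, d p ∉ X.toFml.predSyms) :
    DefinersFaithful (expand I X d dflt) d X [] := fun q hq b => by
  rw [List.nil_append, holds_Dat_expand hinj hq,
    Fml.holds_iff_of_agreeExcept agreeExcept_expand _ b]
  rintro r ⟨p, hp, rfl⟩ hr
  exact hfresh p hp <|
    Fml.mem_predSyms_iff.mpr (X.usesPred_toFml_sub hq (Fml.mem_predSyms_iff.mp hr))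

end Expansion

section Definers

variable {X : RQ} {d : List ℕ → ℕ}
  (hinj : ∀ p ∈ X.posL, ∀ q ∈ X.posL, d p = d q → p = q)
  (hfresh : ∀ p ∈ X.posL, d p ∉ X.toFml.predSyms)
include hinj hfresh

theorem exists_agreeExcept_holds_DEF_iff [Nonempty D] {I : Interp D} {a : ℕ → D} :
    (∃ I' : Interp D,
        AgreeExcept ∅ {r | ∃ p ∈ X.posL, r = d p} I I' ∧ (DEF d X).holds I' a) ↔
      X.toFml.holds I a := by
  have hX : ∀ r ∈ {r | ∃ p ∈ X.posL, r = d p}, r ∉ X.toFml.predSyms := by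
    rintro r ⟨p, hp, rfl⟩
    exact hfresh p hp
  constructor
  · rintro ⟨I', hI', hDEF⟩
    exact (Fml.holds_iff_of_agreeExcept hI' hX a).mpr (entails_DEF d X D ‹_› I' a hDEF)
  · intro h
    refine ⟨expand I X d (Classical.arbitrary D), agreeExcept_expand, holds_DEF_of_definersFaithful
      (definersFaithful_expand hinj hfresh) ?_⟩
    exact (Fml.holds_iff_of_agreeExcept agreeExcept_expand hX a).mp h

theorem DEF_entails_iff {Φ : Fml} (hΦ : ∀ p ∈ X.posL, d p ∉ Φ.predSyms) :
    Entails (DEF d X) Φ ↔ Entails X.toFml Φ := by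
  refine ⟨fun h D hD I a hX => ?_,
    fun h D hD I a hDEF => h D hD I a (entails_DEF d X D hD I a hDEF)⟩
  obtain ⟨I', hI', hDEF⟩ := (exists_agreeExcept_holds_DEF_iff hinj hfresh).mpr hX
  refine (Fml.holds_iff_of_agreeExcept hI' ?_ a).mpr (h D hD I' a hDEF)
  rintro r ⟨p, hp, rfl⟩
  exact hΦ p hp

end Definers

theorem def_form_interpolant_equivalence_general (F G : RQ)
    (d e : List ℕ → ℕ) (H : Fml)
    (hinjd : ∀ p ∈ F.posL, ∀ q ∈ F.posL, d p = d q → p = q)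
    (hinje : ∀ p ∈ (RQ.negR G).posL, ∀ q ∈ (RQ.negR G).posL, e p = e q → p = q)
    (hfreshd : ∀ p ∈ F.posL,
      d p ∉ (RQ.toFml F).predSyms ∧ d p ∉ (RQ.toFml G).predSyms ∧ d p ∉ H.predSyms)
    (hfreshe : ∀ p ∈ (RQ.negR G).posL,
      e p ∉ (RQ.toFml F).predSyms ∧ e p ∉ (RQ.toFml G).predSyms ∧ e p ∉ H.predSyms) :
    ((Entails (RQ.toFml F) H ∧ Entails H (RQ.toFml G)) ↔
      ((∀ (D : Type) (_ : Nonempty D) (I : Interp D) (a : ℕ → D),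
          (∃ I' : Interp D, AgreeExcept ∅ {r | ∃ p ∈ F.posL, r = d p} I I' ∧
            (DEF d F).holds I' a) → H.holds I a)
       ∧ (∀ (D : Type) (_ : Nonempty D) (I : Interp D) (a : ℕ → D),
          H.holds I a →
            ¬ ∃ I' : Interp D, AgreeExcept ∅ {r | ∃ p ∈ (RQ.negR G).posL, r = e p} I I' ∧
              (DEF e (RQ.negR G)).holds I' a)))
    ∧
    ((Entails (RQ.toFml F) H ∧ Entails H (RQ.toFml G)) ↔
      (Entails (DEF d F) H ∧ Entails H (.neg (DEF e (RQ.negR G))))) := by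
  have hdF : ∀ p ∈ F.posL, d p ∉ F.toFml.predSyms := fun p hp => (hfreshd p hp).1
  have heG : ∀ p ∈ G.negR.posL, e p ∉ G.negR.toFml.predSyms := fun p hp =>
    G.predSyms_negR ▸ (hfreshe p hp).2.1
  have heH : ∀ p ∈ G.negR.posL, e p ∉ (Fml.neg H).predSyms := fun p hp =>
    H.predSyms_neg ▸ (hfreshe p hp).2.2
  refine ⟨and_congr (forall₄_congr fun _ _ _ _ => ?_) (forall₄_congr fun _ _ _ _ => ?_), ?_⟩
  · rw [exists_agreeExcept_holds_DEF_iff hinjd hdF]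
  · rw [exists_agreeExcept_holds_DEF_iff hinje heG, RQ.holds_negR, not_not]
  · rw [DEF_entails_iff hinjd hdF fun p hp => (hfreshd p hp).2.2, entails_neg_comm,
      DEF_entails_iff hinje heG heH, entails_negR_neg_iff]

/-- Semantic property of interpolants for RQFO formulas in
definitional form: the three characterizations (1), (2) and (3) are
equivalent. -/
theorem def_form_interpolant_equivalence (F G : RQ) (hwfF : F.wf) (hwfG : G.wf)
    (d e : List ℕ → ℕ) (H : Fml)
    (hinjd : ∀ p ∈ F.posL, ∀ q ∈ F.posL, d p = d q → p = q)
    (hinje : ∀ p ∈ (RQ.negR G).posL, ∀ q ∈ (RQ.negR G).posL, e p = e q → p = q)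
    (hde : ∀ p ∈ F.posL, ∀ q ∈ (RQ.negR G).posL, d p ≠ e q)
    (hfreshd : ∀ p ∈ F.posL,
      d p ∉ (RQ.toFml F).predSyms ∧ d p ∉ (RQ.toFml G).predSyms ∧ d p ∉ H.predSyms)
    (hfreshe : ∀ p ∈ (RQ.negR G).posL,
      e p ∉ (RQ.toFml F).predSyms ∧ e p ∉ (RQ.toFml G).predSyms ∧ e p ∉ H.predSyms) :
    ((Entails (RQ.toFml F) H ∧ Entails H (RQ.toFml G)) ↔
      ((∀ (D : Type) (_ : Nonempty D) (I : Interp D) (a : ℕ → D),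
          (∃ I' : Interp D, AgreeExcept ∅ {r | ∃ p ∈ F.posL, r = d p} I I' ∧
            (DEF d F).holds I' a) → H.holds I a)
       ∧ (∀ (D : Type) (_ : Nonempty D) (I : Interp D) (a : ℕ → D),
          H.holds I a →
            ¬ ∃ I' : Interp D, AgreeExcept ∅ {r | ∃ p ∈ (RQ.negR G).posL, r = e p} I I' ∧
              (DEF e (RQ.negR G)).holds I' a)))
    ∧
    ((Entails (RQ.toFml F) H ∧ Entails H (RQ.toFml G)) ↔
      (Entails (DEF d F) H ∧ Entails H (.neg (DEF e (RQ.negR G))))) :=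
  def_form_interpolant_equivalence_general F G d e H hinjd hinje hfreshd hfreshe

end CTI
end

section
/- Let F be a formula in which all non-ground terms are variables. Let σ be an injective ground substitution such that rng(σ) ⊆ garg(F) and no member of dom(σ) occurs in F, and let γ be an injective substitution such that rng(γ) = garg(F), no member of dom(γ) occurs in F, and the restriction of γ to dom(σ) equals σ. Then F⌐⌐σ = (F⌐γ)(γ restricted to dom(γ) \ dom(σ)), i.e., the result of replacing in F every atom-argument occurrence of a term in rng(σ) by its σ-preimage variable equals the result of first replacing all maximal occurrences of terms in rng(γ) by their γ-preimage variables and then substituting back via γ those variables not in dom(σ). -/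
namespace CTI

/-! ### Literals, clauses, clausal formulas -/

/-- A literal: a polarity (`true` = positive atom, `false` = negated atom),
a predicate symbol and an argument list. -/
abbrev Lit := Bool × ℕ × List Tm

/-- A clause: a finite disjunction of literals, as a list. -/
abbrev Clause := List Lit

/-- A clausal formula: a finite conjunction of clauses, as a list. -/
abbrev CForm := List Clause

/-- The complement of a literal. -/
def litCompl (l : Lit) : Lit := (!l.1, l.2.1, l.2.2)

/-- The formula corresponding to a literal. -/
def litFml (l : Lit) : Fml := if l.1 then .atom l.2.1 l.2.2 else .neg (.atom l.2.1 l.2.2)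

/-- The formula corresponding to a clause (disjunction of its literals). -/
def clauseFml (C : Clause) : Fml := C.foldr (fun l F => .or (litFml l) F) .fls

/-- The formula corresponding to a clausal formula (conjunction of its clauses). -/
def cformFml (cs : CForm) : Fml := cs.foldr (fun C F => .and (clauseFml C) F) .tru

def litGround (l : Lit) : Prop := ∀ t ∈ l.2.2, Tm.vars t = []
def clauseGround (C : Clause) : Prop := ∀ l ∈ C, litGround l
def cformGround (cs : CForm) : Prop := ∀ C ∈ cs, clauseGround C

/-- The function symbols occurring in a clausal formula. -/
def cformFuns (cs : CForm) : Set ℕ := {f | ∃ C ∈ cs, ∃ l ∈ C, ∃ t ∈ l.2.2, f ∈ Tm.funs t}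

/-- Application of a substitution to a term. -/
def Tm.applySub (σ : ℕ → Tm) : Tm → Tm
  | .var x => σ x
  | .fn f ts => .fn f (ts.attach.map (fun t => Tm.applySub σ t.1))
decreasing_by
  have h := List.sizeOf_lt_of_mem t.2; simp_wf; omega

/-- Application of a substitution to a literal. -/
def litSub (σ : ℕ → Tm) (l : Lit) : Lit := (l.1, l.2.1, l.2.2.map (Tm.applySub σ))

/-- `C` is a substitution instance of the clause `D`. -/
def instClause (C D : Clause) : Prop := ∃ σ : ℕ → Tm, C = D.map (litSub σ)

/-- The subterm relation: `Subt s t` iff `s` occurs as a subterm of `t`. -/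
inductive Subt : Tm → Tm → Prop
  | refl (t) : Subt t t
  | step {s u} (f : ℕ) (ts : List Tm) : u ∈ ts → Subt s u → Subt s (.fn f ts)

/-- Strict subterm relation. -/
def StrictSubt (s t : Tm) : Prop := Subt s t ∧ s ≠ t

/-- `Tm.builtFrom S C t`: `t` is a ground term built from function symbols in `S`,
where the symbols in `C` may additionally be used as constants. -/
inductive Tm.builtFrom (S C : Set ℕ) : Tm → Prop
  | app {f : ℕ} {ts : List Tm} : f ∈ S → (∀ t ∈ ts, Tm.builtFrom S C t) →
      Tm.builtFrom S C (.fn f ts)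
  | cst {c : ℕ} : c ∈ C → Tm.builtFrom S C (.fn c [])

/-! ### Clausal tableaux -/

/-- A node of a clausal tableau: a literal label, a side label
(`true` = red/left, `false` = blue/right; ignored for one-sided tableaux)
and the list of children in left-to-right order.  A whole tableau is the
list of children of the (unlabeled) root. -/
inductive Tab : Type where
  | node : Lit → Bool → List Tab → Tab

def Tab.lit : Tab → Lit | .node l _ _ => l
def Tab.side : Tab → Bool | .node _ s _ => s
def Tab.children : Tab → List Tab | .node _ _ cs => cs

/-- The subtrees of a clausal tableau (given as list of children of the root)
together with the branch of (literal, side) pairs of their strict ancestors,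
innermost first. -/
inductive OccIn (T : List Tab) : List (Lit × Bool) → Tab → Prop
  | top {t} : t ∈ T → OccIn T [] t
  | step {br l s cs c} : OccIn T br (.node l s cs) → c ∈ cs → OccIn T ((l, s) :: br) c

/-- Well-formedness of a (one-sided) clausal tableau below some node, for the
clausal formula `F`: the children of every node either are absent or their
literal labels form an instance of a clause in `F`. -/
inductive TabFor (F : CForm) : Tab → Prop
  | mk {l s cs} : (cs = [] ∨ ∃ D ∈ F, instClause (cs.map Tab.lit) D) →
      (∀ c ∈ cs, TabFor F c) → TabFor F (.node l s cs)

/-- A clausal tableau for the clausal formula `F`. -/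
def TableauFor (F : CForm) (T : List Tab) : Prop :=
  (T = [] ∨ ∃ D ∈ F, instClause (T.map Tab.lit) D) ∧ ∀ t ∈ T, TabFor F t

/-- Closedness of the subtree rooted at a node whose strict ancestors carry
the literals in `br`: every leaf has an ancestor labeled with its complement. -/
inductive ClosedFrom : List Lit → Tab → Prop
  | leaf {br : List Lit} {l s} : litCompl l ∈ br → ClosedFrom br (.node l s [])
  | inner {br : List Lit} {l s cs} : cs ≠ [] → (∀ c ∈ cs, ClosedFrom (l :: br) c) →
      ClosedFrom br (.node l s cs)

/-- A closed clausal tableau: all leaves are closed (the root, being unlabeled,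
must have children). -/
def ClosedTableau (T : List Tab) : Prop := T ≠ [] ∧ ∀ t ∈ T, ClosedFrom [] t

/-- All nodes of a subtree satisfy `P`. -/
inductive TabAll (P : Tab → Prop) : Tab → Prop
  | mk {l s cs} : P (.node l s cs) → (∀ c ∈ cs, TabAll P c) → TabAll P (.node l s cs)

/-! ### Two-sided clausal tableaux and interpolant extraction -/

/-- Well-formedness of a two-sided clausal tableau below a node, for clausal
formulas `Fr` (side `true` = red) and `Fb` (side `false` = blue):
siblings have the same side, and the literal labels of the children of any
node form an instance of a clause of the formula of their side. -/
inductive TwoTabFor (Fr Fb : CForm) : Tab → Prop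
  | mk {l s cs} :
      (cs = [] ∨ ∃ b : Bool, (∀ c ∈ cs, Tab.side c = b) ∧
        ∃ D ∈ (if b then Fr else Fb), instClause (cs.map Tab.lit) D) →
      (∀ c ∈ cs, TwoTabFor Fr Fb c) → TwoTabFor Fr Fb (.node l s cs)

/-- A two-sided clausal tableau for `Fr` and `Fb`. -/
def TwoTableauFor (Fr Fb : CForm) (T : List Tab) : Prop :=
  (T = [] ∨ ∃ b : Bool, (∀ c ∈ T, Tab.side c = b) ∧
    ∃ D ∈ (if b then Fr else Fb), instClause (T.map Tab.lit) D)
  ∧ ∀ t ∈ T, TwoTabFor Fr Fb t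

/-- Closedness, with the branch carrying side labels. -/
inductive SClosedFrom : List (Lit × Bool) → Tab → Prop
  | leaf {br : List (Lit × Bool)} {l s} : (∃ s', (litCompl l, s') ∈ br) →
      SClosedFrom br (.node l s [])
  | inner {br : List (Lit × Bool)} {l s cs} : cs ≠ [] →
      (∀ c ∈ cs, SClosedFrom ((l, s) :: br) c) → SClosedFrom br (.node l s cs)

/-- The value of ipol at a closed leaf, determined by the side `s` of the leaf
and the side `ts` of its target, from the literal label `l`. -/
def leafIpol (s ts : Bool) (l : Lit) : Fml :=
  match s, ts with
  | true, true => .fls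
  | true, false => litFml l
  | false, true => litFml (litCompl l)
  | false, false => .tru

/-- `Ipol br t H`: `H` is a value of ipol at the node `t` whose branch of strict
ancestors (with sides) is `br`, for some association of targets to closed leaves.
At a leaf, the target is an ancestor labeled with the complement of the leaf's
literal; at an inner node, ipol is the disjunction (side red) or conjunction
(side blue) of the values at the children. -/
inductive Ipol : List (Lit × Bool) → Tab → Fml → Prop
  | leaf {br l s ts} : (litCompl l, ts) ∈ br →
      Ipol br (.node l s []) (leafIpol s ts l)
  | innerR {br l s cs Hs} : cs ≠ [] → (∀ c ∈ cs, Tab.side c = true) →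
      cs.length = Hs.length →
      (∀ p ∈ List.zip cs Hs, Ipol ((l, s) :: br) p.1 p.2) →
      Ipol br (.node l s cs) (Hs.foldr .or .fls)
  | innerB {br l s cs Hs} : cs ≠ [] → (∀ c ∈ cs, Tab.side c = false) →
      cs.length = Hs.length →
      (∀ p ∈ List.zip cs Hs, Ipol ((l, s) :: br) p.1 p.2) →
      Ipol br (.node l s cs) (Hs.foldr .and .tru)

/-- `IpolRoot T H`: `H` is a value of ipol at the root of the tableau `T`. -/
inductive IpolRoot : List Tab → Fml → Prop
  | rootR {T Hs} : T ≠ [] → (∀ t ∈ T, Tab.side t = true) →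
      T.length = Hs.length → (∀ p ∈ List.zip T Hs, Ipol [] p.1 p.2) →
      IpolRoot T (Hs.foldr .or .fls)
  | rootB {T Hs} : T ≠ [] → (∀ t ∈ T, Tab.side t = false) →
      T.length = Hs.length → (∀ p ∈ List.zip T Hs, Ipol [] p.1 p.2) →
      IpolRoot T (Hs.foldr .and .tru)

/-- branch_S(N): the conjunction of the literals with side `s` on the branch `br`. -/
def branchFml (s : Bool) (br : List (Lit × Bool)) : Fml :=
  ((br.filter (fun p => p.2 == s)).map (fun p => litFml p.1)).foldr .and .tru

end CTI

namespace CTI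

/-- The domain of a substitution. -/
def domS (σ : ℕ → Tm) : Set ℕ := {x | σ x ≠ .var x}

/-- The range of a substitution. -/
def rngS (σ : ℕ → Tm) : Set Tm := {t | ∃ x ∈ domS σ, σ x = t}

/-- An injective substitution. -/
def InjSub (σ : ℕ → Tm) : Prop := ∀ x ∈ domS σ, ∀ y ∈ domS σ, σ x = σ y → x = y

/-- A ground substitution. -/
def GroundSub (σ : ℕ → Tm) : Prop := ∀ x ∈ domS σ, Tm.vars (σ x) = []

/-- The terms occurring in a formula as an argument of a predicate. -/
def Fml.pargs : Fml → Set Tm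
  | .tru => ∅
  | .fls => ∅
  | .atom _ ts => {t | t ∈ ts}
  | .neg F => F.pargs
  | .and F G => F.pargs ∪ G.pargs
  | .or F G => F.pargs ∪ G.pargs
  | .all _ F => F.pargs
  | .ex _ F => F.pargs

/-- garg(F): the ground terms occurring in `F` as an argument of a predicate. -/
def Fml.gargs (F : Fml) : Set Tm := {t | t ∈ F.pargs ∧ Tm.vars t = []}

open Classical in
/-- Replace a term by its `σ`-preimage variable if it is in the range of `σ`. -/
noncomputable def topRevTm (σ : ℕ → Tm) (t : Tm) : Tm :=
  if h : ∃ x ∈ domS σ, σ x = t then .var h.choose else t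

open Classical in
/-- F⌐⌐σ ('toprevsubst'): replace in `F` every occurrence of a member of
rng(σ) that is as argument of an atom by its `σ`-preimage variable. -/
noncomputable def Fml.topRev (σ : ℕ → Tm) : Fml → Fml
  | .tru => .tru
  | .fls => .fls
  | .atom p ts => .atom p (ts.map (topRevTm σ))
  | .neg F => .neg (F.topRev σ)
  | .and F G => .and (F.topRev σ) (G.topRev σ)
  | .or F G => .or (F.topRev σ) (G.topRev σ)
  | .all x F => .all x (F.topRev σ)
  | .ex x F => .ex x (F.topRev σ)

open Classical in
/-- E⌐σ ('revsubst') on terms: replace every occurrence of a subterm in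
rng(σ) that is not a strict subterm of another subterm in rng(σ) by its
`σ`-preimage variable. -/
noncomputable def revTm (σ : ℕ → Tm) : Tm → Tm
  | .var x =>
      if h : ∃ y ∈ domS σ, σ y = Tm.var x then .var h.choose else .var x
  | .fn f ts =>
      if h : ∃ y ∈ domS σ, σ y = Tm.fn f ts then .var h.choose
      else .fn f (ts.attach.map (fun t => revTm σ t.1))
decreasing_by
  have h := List.sizeOf_lt_of_mem t.2; simp_wf; omega

/-- F⌐σ ('revsubst') on formulas. -/
noncomputable def Fml.revF (σ : ℕ → Tm) : Fml → Fml
  | .tru => .tru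
  | .fls => .fls
  | .atom p ts => .atom p (ts.map (revTm σ))
  | .neg F => .neg (F.revF σ)
  | .and F G => .and (F.revF σ) (G.revF σ)
  | .or F G => .or (F.revF σ) (G.revF σ)
  | .all x F => .all x (F.revF σ)
  | .ex x F => .ex x (F.revF σ)

/-- Application of a substitution to the free variables of a formula. -/
def Fml.applySub (σ : ℕ → Tm) : Fml → Fml
  | .tru => .tru
  | .fls => .fls
  | .atom p ts => .atom p (ts.map (Tm.applySub σ))
  | .neg F => .neg (F.applySub σ)
  | .and F G => .and (F.applySub σ) (G.applySub σ)
  | .or F G => .or (F.applySub σ) (G.applySub σ)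
  | .all x F => .all x (F.applySub (fun y => if y = x then .var y else σ y))
  | .ex x F => .ex x (F.applySub (fun y => if y = x then .var y else σ y))

/-- `t` is ground or a variable. -/
def flatTm (t : Tm) : Prop := Tm.vars t = [] ∨ ∃ x, t = Tm.var x

end CTI

namespace CTI

open Classical in
lemma key_term (F : Fml) (σ γ : ℕ → Tm)
    (hgσ : GroundSub σ)
    (hinjγ : InjSub γ)
    (hrngγ : rngS γ = F.gargs)
    (hdomγ : ∀ x ∈ domS γ, x ∉ F.varsSet)
    (hres : ∀ x ∈ domS σ, γ x = σ x)
    (t : Tm) (hflat : flatTm t) (ht : t ∈ F.pargs)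
    (hv : ∀ x, t = .var x → x ∈ F.varsSet) :
    topRevTm σ t =
      Tm.applySub (fun x => if x ∈ domS γ ∧ x ∉ domS σ then γ x else .var x)
        (revTm γ t) := by
  rcases hflat with hg | ⟨x, rfl⟩
  · have htg : t ∈ F.gargs := ⟨ht, hg⟩
    have hex : ∃ y ∈ domS γ, γ y = t := by rw [← hrngγ] at htg; exact htg
    have htnotvar : ∀ z : ℕ, t ≠ Tm.var z := by
      intro z hz; rw [hz] at hg; simp [Tm.vars] at hg
    have hrev : revTm γ t = Tm.var hex.choose := by
      cases t with
      | var z => exact absurd rfl (htnotvar z)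
      | fn f ts => rw [revTm, dif_pos hex]
    obtain ⟨hy₀d, hy₀⟩ := hex.choose_spec
    rw [hrev]
    simp only [Tm.applySub]
    by_cases hσ : ∃ x ∈ domS σ, σ x = t
    · have hx₀ := hσ.choose_spec
      have hx₀γ : γ hσ.choose = t := by rw [hres _ hx₀.1, hx₀.2]
      have hx₀d : hσ.choose ∈ domS γ := by
        intro h; rw [h] at hx₀γ; exact htnotvar _ hx₀γ.symm
      have heq : hex.choose = hσ.choose :=
        hinjγ _ hy₀d _ hx₀d (by rw [hy₀, hx₀γ])
      have : ¬ (hex.choose ∈ domS γ ∧ hex.choose ∉ domS σ) := by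
        rw [heq]; intro h; exact h.2 hx₀.1
      rw [if_neg this, topRevTm, dif_pos hσ, heq]
    · have hy₀σ : hex.choose ∉ domS σ := by
        intro h
        exact hσ ⟨hex.choose, h, by rw [← hres _ h, hy₀]⟩
      rw [if_pos ⟨hy₀d, hy₀σ⟩, hy₀, topRevTm, dif_neg hσ]
  · have hx : x ∈ F.varsSet := hv x rfl
    have h1 : ¬ ∃ y ∈ domS σ, σ y = Tm.var x := by
      rintro ⟨y, hy, hyx⟩
      have := hgσ y hy; rw [hyx] at this; simp [Tm.vars] at this
    have h2 : ¬ ∃ y ∈ domS γ, γ y = Tm.var x := by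
      rintro ⟨y, hy, hyx⟩
      have : Tm.var x ∈ rngS γ := ⟨y, hy, hyx⟩
      rw [hrngγ] at this
      have h3 : Tm.vars (Tm.var x) = [] := this.2
      simp [Tm.vars] at h3
    have hxγ : x ∉ domS γ := fun h => hdomγ x h hx
    rw [topRevTm, dif_neg h1, revTm, dif_neg h2]
    simp only [Tm.applySub]
    rw [if_neg (fun h => hxγ h.1)]

open Classical in
lemma toprev_aux (F : Fml) (σ γ : ℕ → Tm)
    (hflat : ∀ t ∈ F.pargs, flatTm t)
    (hgσ : GroundSub σ)
    (hinjγ : InjSub γ)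
    (hrngγ : rngS γ = F.gargs)
    (hdomγ : ∀ x ∈ domS γ, x ∉ F.varsSet)
    (hres : ∀ x ∈ domS σ, γ x = σ x)
    (G : Fml) (hp : G.pargs ⊆ F.pargs) (hvs : G.varsSet ⊆ F.varsSet) :
    G.topRev σ =
      (G.revF γ).applySub
        (fun x => if x ∈ domS γ ∧ x ∉ domS σ then γ x else .var x) := by
  set τ : ℕ → Tm := fun x => if x ∈ domS γ ∧ x ∉ domS σ then γ x else .var x with hτ
  induction G with
  | tru => rfl
  | fls => rfl
  | atom p ts =>
    simp only [Fml.topRev, Fml.revF, Fml.applySub, List.map_map]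
    congr 1
    apply List.map_congr_left
    intro t htts
    have htF : t ∈ F.pargs := hp (by simpa [Fml.pargs] using htts)
    exact key_term F σ γ hgσ hinjγ hrngγ hdomγ hres t (hflat t htF) htF
      (fun x hx => hvs (by subst hx; exact ⟨Tm.var x, htts, by simp [Tm.vars]⟩))
  | neg G ih =>
    simp only [Fml.topRev, Fml.revF, Fml.applySub]
    rw [ih (fun t ht => hp ht) (fun x hx => hvs hx)]
  | and G1 G2 ih1 ih2 =>
    simp only [Fml.topRev, Fml.revF, Fml.applySub]
    rw [ih1 (fun t ht => hp (Or.inl ht)) (fun x hx => hvs (Or.inl hx)),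
        ih2 (fun t ht => hp (Or.inr ht)) (fun x hx => hvs (Or.inr hx))]
  | or G1 G2 ih1 ih2 =>
    simp only [Fml.topRev, Fml.revF, Fml.applySub]
    rw [ih1 (fun t ht => hp (Or.inl ht)) (fun x hx => hvs (Or.inl hx)),
        ih2 (fun t ht => hp (Or.inr ht)) (fun x hx => hvs (Or.inr hx))]
  | all x G ih =>
    have hxF : x ∈ F.varsSet := hvs (by simp [Fml.varsSet])
    have hτx : (fun y => if y = x then Tm.var y else τ y) = τ := by
      funext y
      by_cases h : y = x
      · subst h
        simp only [if_pos rfl]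
        rw [hτ]
        show Tm.var y = if y ∈ domS γ ∧ y ∉ domS σ then γ y else Tm.var y
        rw [if_neg (fun h => hdomγ y h.1 hxF)]
      · rw [if_neg h]
    simp only [Fml.topRev, Fml.revF, Fml.applySub, hτx]
    rw [ih (fun t ht => hp ht) (fun y hy => hvs (Set.mem_insert_iff.mpr (Or.inr hy)))]
  | ex x G ih =>
    have hxF : x ∈ F.varsSet := hvs (by simp [Fml.varsSet])
    have hτx : (fun y => if y = x then Tm.var y else τ y) = τ := by
      funext y
      by_cases h : y = x
      · subst h
        simp only [if_pos rfl]
        rw [hτ]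
        show Tm.var y = if y ∈ domS γ ∧ y ∉ domS σ then γ y else Tm.var y
        rw [if_neg (fun h => hdomγ y h.1 hxF)]
      · rw [if_neg h]
    simp only [Fml.topRev, Fml.revF, Fml.applySub, hτx]
    rw [ih (fun t ht => hp ht) (fun y hy => hvs (Set.mem_insert_iff.mpr (Or.inr hy)))]

open Classical in
/-- Relation between inverse substitution of arguments of atoms
('toprevsubst') and inverse substitution of terms ('revsubst'). -/
theorem toprevsubst_eq_revsubst (F : Fml) (σ γ : ℕ → Tm)
    (hflat : ∀ t ∈ F.pargs, flatTm t)
    (hinjσ : InjSub σ) (hgσ : GroundSub σ)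
    (hrngσ : rngS σ ⊆ F.gargs)
    (hdomσ : ∀ x ∈ domS σ, x ∉ F.varsSet)
    (hinjγ : InjSub γ)
    (hrngγ : rngS γ = F.gargs)
    (hdomγ : ∀ x ∈ domS γ, x ∉ F.varsSet)
    (hres : ∀ x ∈ domS σ, γ x = σ x) :
    F.topRev σ =
      (F.revF γ).applySub
        (fun x => if x ∈ domS γ ∧ x ∉ domS σ then γ x else .var x) :=
  toprev_aux F σ γ hflat hgσ hinjγ hrngγ hdomγ hres F (fun _ h => h) (fun _ h => h)

end CTI
end

section
/- Let F and G be formulas in which no non-ground terms with the exception of variables occur. Let σ be an injective ground substitution such that rng(σ) ⊆ garg(F), rng(σ) ∩ garg(G) = ∅, and no member of dom(σ) occurs in F or in G. Let x̄ = dom(σ). Then ∃x̄ (F⌐⌐σ) ⊨ G if and only if F ⊨ G. -/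
/-!
Substituting for each `x ∈ dom σ` the value of `σ x` shows that `F` entails `∃x̄ (F⌐⌐σ)`,
which gives one direction. For the other, take a model `I, e` of `F⌐⌐σ` and build a model
of `F` over `D × Tm` whose second component records the ground term being evaluated;
predicates read a pair `(d, t)` as `e x` when `t = σ x` and as `d` otherwise. Since all
predicate arguments are variables or ground terms, this reading is a surjective strict
homomorphism on them, so `F` holds in the new model, hence `G` does, and since no member
of `rng σ` is an argument in `G`, `G` transfers back to `I`.
-/

namespace CTI

section Terms

variable {D : Type}

theorem Tm.induction (P : Tm → Prop) (var : ∀ x, P (.var x))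
    (fn : ∀ f ts, (∀ t ∈ ts, P t) → P (.fn f ts)) (t : Tm) : P t := by
  suffices ∀ n (t : Tm), sizeOf t ≤ n → P t from this _ t le_rfl
  intro n
  induction n with
  | zero => intro t h; cases t <;> simp at h
  | succ n ih =>
    rintro (x | ⟨f, ts⟩) h
    · exact var x
    · refine fn f ts fun u hu => ih u ?_
      have := List.sizeOf_lt_of_mem hu
      simp at h
      omega

theorem Tm.eval_fn (I : Interp D) (a : ℕ → D) (f : ℕ) (ts : List Tm) :
    Tm.eval I a (.fn f ts) = I.fn f (ts.map (Tm.eval I a)) := by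
  rw [Tm.eval]
  simp

theorem Tm.mem_vars_fn {x f : ℕ} {ts : List Tm} :
    x ∈ Tm.vars (.fn f ts) ↔ ∃ u ∈ ts, x ∈ Tm.vars u := by
  rw [Tm.vars]
  simp

theorem Tm.vars_eq_nil_of_mem {f : ℕ} {ts : List Tm} (h : Tm.vars (.fn f ts) = [])
    {u : Tm} (hu : u ∈ ts) : Tm.vars u = [] :=
  List.eq_nil_iff_forall_not_mem.mpr fun x hx => by
    simpa [h] using (Tm.mem_vars_fn (f := f)).mpr ⟨u, hu, hx⟩

theorem Tm.eval_congr_s13 (I : Interp D) {a a' : ℕ → D} {t : Tm}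
    (h : ∀ x ∈ Tm.vars t, a x = a' x) : Tm.eval I a t = Tm.eval I a' t := by
  induction t using Tm.induction with
  | var x => simpa [Tm.eval, Tm.vars] using h
  | fn f ts ih =>
    rw [Tm.eval_fn, Tm.eval_fn]
    exact congrArg _ <| List.map_congr_left fun u hu =>
      ih u hu fun x hx => h x (Tm.mem_vars_fn.mpr ⟨u, hu, hx⟩)

theorem Tm.eval_of_vars_eq_nil (I : Interp D) {t : Tm} (h : Tm.vars t = []) (a a' : ℕ → D) :
    Tm.eval I a t = Tm.eval I a' t :=
  Tm.eval_congr_s13 I fun x hx => by simp [h] at hx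

end Terms

section Formulas

variable {D : Type}

theorem Fml.holds_congr_s13 (I : Interp D) {F : Fml} {a a' : ℕ → D}
    (h : ∀ y ∈ F.varsSet, a y = a' y) : F.holds I a ↔ F.holds I a' := by
  induction F generalizing a a' with
  | tru | fls => rfl
  | atom p ts =>
    simp only [Fml.holds]
    rw [List.map_congr_left fun t ht => Tm.eval_congr_s13 I fun x hx => h x ⟨t, ht, hx⟩]
  | neg F ih => exact not_congr (ih h)
  | and F G ihF ihG =>
    exact and_congr (ihF fun y hy => h y (.inl hy)) (ihG fun y hy => h y (.inr hy))
  | or F G ihF ihG =>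
    exact or_congr (ihF fun y hy => h y (.inl hy)) (ihG fun y hy => h y (.inr hy))
  | all x F ih | ex x F ih =>
    have key (d : D) : F.holds I (Function.update a x d) ↔ F.holds I (Function.update a' x d) :=
      ih fun y hy => by
        by_cases hyx : y = x
        · simp [hyx]
        · simpa [hyx] using h y (Set.mem_insert_of_mem x hy)
    simp only [Fml.holds, key]

theorem holds_exN_iff (I : Interp D) (H : Fml) (xs : List ℕ) (a : ℕ → D) :
    (exN xs H).holds I a ↔ ∃ a' : ℕ → D, (∀ y ∉ xs, a' y = a y) ∧ H.holds I a' := by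
  induction xs generalizing a with
  | nil =>
    refine ⟨fun h => ⟨a, fun _ _ => rfl, h⟩, ?_⟩
    rintro ⟨a', ha', h⟩
    rwa [funext fun y => ha' y List.not_mem_nil] at h
  | cons x xs ih =>
    simp only [exN, List.foldr_cons, Fml.holds] at ih ⊢
    simp only [ih, List.mem_cons, not_or]
    constructor
    · rintro ⟨d, a', ha', h⟩
      exact ⟨a', fun y hy => by rw [ha' y hy.2, Function.update_of_ne hy.1], h⟩
    · rintro ⟨a', ha', h⟩
      refine ⟨a' x, a', fun y hy => ?_, h⟩
      by_cases hyx : y = x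
      · simp [hyx]
      · rw [Function.update_of_ne hyx, ha' y ⟨hyx, hy⟩]

theorem Fml.holds_iff_of_surjective {D' : Type} (I : Interp D) (J : Interp D') (π : D' → D)
    (hπ : Function.Surjective π) (hpr : ∀ p ds, J.pr p ds ↔ I.pr p (ds.map π))
    {F : Fml} (hargs : ∀ t ∈ F.pargs, ∀ c, π (Tm.eval J c t) = Tm.eval I (π ∘ c) t)
    (b : ℕ → D') : F.holds J b ↔ F.holds I (π ∘ b) := by
  induction F generalizing b with
  | tru | fls => rfl
  | atom p ts =>
    simp only [Fml.holds, hpr, List.map_map]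
    exact Iff.of_eq (congrArg _ (List.map_congr_left fun t ht => hargs t ht b))
  | neg F ih => exact not_congr (ih hargs b)
  | and F G ihF ihG =>
    exact and_congr (ihF (fun t ht => hargs t (.inl ht)) b) (ihG (fun t ht => hargs t (.inr ht)) b)
  | or F G ihF ihG =>
    exact or_congr (ihF (fun t ht => hargs t (.inl ht)) b) (ihG (fun t ht => hargs t (.inr ht)) b)
  | all x F ih =>
    simp only [Fml.holds, ih hargs, Function.comp_update]
    exact (hπ.forall (p := fun d => F.holds I (Function.update (π ∘ b) x d))).symm
  | ex x F ih =>
    simp only [Fml.holds, ih hargs, Function.comp_update]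
    exact (hπ.exists (p := fun d => F.holds I (Function.update (π ∘ b) x d))).symm

end Formulas

section TopRev

variable {D : Type} {σ : ℕ → Tm}

theorem topRevTm_of_mem {t : Tm} (ht : t ∈ rngS σ) :
    ∃ x ∈ domS σ, σ x = t ∧ topRevTm σ t = .var x := by
  have ht : ∃ x ∈ domS σ, σ x = t := ht
  rw [topRevTm, dif_pos ht]
  exact ⟨_, ht.choose_spec.1, ht.choose_spec.2, rfl⟩

theorem topRevTm_of_notMem {t : Tm} (ht : t ∉ rngS σ) : topRevTm σ t = t :=
  dif_neg ht

theorem var_notMem_rngS (hg : GroundSub σ) (y : ℕ) : Tm.var y ∉ rngS σ := by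
  rintro ⟨x, hx, hσx⟩
  simpa [hσx, Tm.vars] using hg x hx

theorem topRevTm_notMem_rngS (hg : GroundSub σ) (t : Tm) : topRevTm σ t ∉ rngS σ := by
  by_cases ht : t ∈ rngS σ
  · obtain ⟨x, -, -, hx⟩ := topRevTm_of_mem ht
    exact hx ▸ var_notMem_rngS hg x
  · rwa [topRevTm_of_notMem ht]

theorem flatTm_topRevTm {t : Tm} (ht : flatTm t) : flatTm (topRevTm σ t) := by
  by_cases hr : t ∈ rngS σ
  · obtain ⟨x, -, -, hx⟩ := topRevTm_of_mem hr
    exact .inr ⟨x, hx⟩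
  · rwa [topRevTm_of_notMem hr]

theorem Fml.mem_pargs_topRev {F : Fml} {t : Tm} (ht : t ∈ (F.topRev σ).pargs) :
    ∃ u ∈ F.pargs, topRevTm σ u = t := by
  induction F with
  | tru | fls => exact ht.elim
  | atom p ts => simpa [Fml.topRev, Fml.pargs] using ht
  | neg F ih | all _ F ih | ex _ F ih => exact ih ht
  | and F G ihF ihG | or F G ihF ihG =>
    rcases ht with ht | ht
    · obtain ⟨u, hu, rfl⟩ := ihF ht
      exact ⟨u, .inl hu, rfl⟩
    · obtain ⟨u, hu, rfl⟩ := ihG ht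
      exact ⟨u, .inr hu, rfl⟩

theorem Fml.holds_topRev_iff (I : Interp D) (hg : GroundSub σ) {F : Fml}
    (hdom : ∀ x ∈ domS σ, x ∉ F.varsSet) {b b' : ℕ → D}
    (hval : ∀ x ∈ domS σ, b' x = Tm.eval I b (σ x)) (hagr : ∀ y ∉ domS σ, b' y = b y) :
    (F.topRev σ).holds I b' ↔ F.holds I b := by
  induction F generalizing b b' with
  | tru | fls => rfl
  | atom p ts =>
    simp only [Fml.topRev, Fml.holds, List.map_map]
    refine Iff.of_eq (congrArg _ (List.map_congr_left fun t ht => ?_))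
    by_cases hr : t ∈ rngS σ
    · obtain ⟨x, hx, rfl, hxt⟩ := topRevTm_of_mem hr
      simp [hxt, Tm.eval, hval x hx]
    · rw [Function.comp_apply, topRevTm_of_notMem hr]
      exact Tm.eval_congr_s13 I fun y hy =>
        hagr y fun hyd => hdom y hyd ⟨t, ht, hy⟩
  | neg F ih => exact not_congr (ih hdom hval hagr)
  | and F G ihF ihG =>
    exact and_congr (ihF (fun x hx h => hdom x hx (.inl h)) hval hagr)
      (ihG (fun x hx h => hdom x hx (.inr h)) hval hagr)
  | or F G ihF ihG =>
    exact or_congr (ihF (fun x hx h => hdom x hx (.inl h)) hval hagr)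
      (ihG (fun x hx h => hdom x hx (.inr h)) hval hagr)
  | all x F ih | ex x F ih =>
    have hval' (d : D) (z : ℕ) (hz : z ∈ domS σ) :
        Function.update b' x d z = Tm.eval I (Function.update b x d) (σ z) := by
      have hzx : z ≠ x := fun h => hdom z hz (h ▸ Set.mem_insert z _)
      rw [Function.update_of_ne hzx, hval z hz]
      exact Tm.eval_of_vars_eq_nil I (hg z hz) _ _
    have hagr' (d : D) (y : ℕ) (hy : y ∉ domS σ) :
        Function.update b' x d y = Function.update b x d y := by
      by_cases hyx : y = x
      · simp [hyx]
      · rw [Function.update_of_ne hyx, Function.update_of_ne hyx, hagr y hy]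
    have hdom' : ∀ z ∈ domS σ, z ∉ F.varsSet := fun z hz h =>
      hdom z hz (Set.mem_insert_of_mem x h)
    have key (d : D) := ih hdom' (hval' d) (hagr' d)
    simp only [Fml.topRev, Fml.holds, key]

end TopRev

section TermRecording

variable {D : Type}

def Interp.withTerms (I : Interp D) (π : D × Tm → D) : Interp (D × Tm) where
  fn f ds := (I.fn f (ds.map Prod.fst), .fn f (ds.map Prod.snd))
  pr p ds := I.pr p (ds.map π)

theorem Tm.eval_withTerms_of_vars_eq_nil (I : Interp D) (π : D × Tm → D) {t : Tm}
    (ht : Tm.vars t = []) (c : ℕ → D × Tm) (c' : ℕ → D) :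
    Tm.eval (I.withTerms π) c t = (Tm.eval I c' t, t) := by
  induction t using Tm.induction with
  | var x => simp [Tm.vars] at ht
  | fn f ts ih =>
    have hts : ∀ u ∈ ts, Tm.eval (I.withTerms π) c u = (Tm.eval I c' u, u) :=
      fun u hu => ih u hu (Tm.vars_eq_nil_of_mem ht hu)
    rw [Tm.eval_fn, Tm.eval_fn, List.map_congr_left hts]
    simp [Interp.withTerms, Function.comp_def]

open Classical in
noncomputable def decode (σ : ℕ → Tm) (e : ℕ → D) (p : D × Tm) : D :=
  if h : ∃ x ∈ domS σ, σ x = p.2 then e h.choose else p.1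

variable {σ : ℕ → Tm} {e : ℕ → D}

theorem decode_of_notMem {p : D × Tm} (hp : p.2 ∉ rngS σ) : decode σ e p = p.1 :=
  dif_neg hp

theorem decode_of_mem_domS (hinj : InjSub σ) {y : ℕ} (hy : y ∈ domS σ) (d : D) :
    decode σ e (d, σ y) = e y := by
  have h : ∃ x ∈ domS σ, σ x = σ y := ⟨y, hy, rfl⟩
  rw [decode, dif_pos h, hinj _ h.choose_spec.1 _ hy h.choose_spec.2]

theorem decode_surjective (hg : GroundSub σ) : Function.Surjective (decode σ e) :=
  fun d => ⟨(d, .var 0), decode_of_notMem (var_notMem_rngS hg 0)⟩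

theorem decode_eval_withTerms (I : Interp D) {t : Tm} (ht : flatTm t) (hrng : t ∉ rngS σ)
    (c : ℕ → D × Tm) :
    decode σ e (Tm.eval (I.withTerms (decode σ e)) c t) = Tm.eval I (decode σ e ∘ c) t := by
  rcases ht with hgr | ⟨y, rfl⟩
  · rw [Tm.eval_withTerms_of_vars_eq_nil I _ hgr c (decode σ e ∘ c)]
    exact decode_of_notMem hrng
  · simp [Tm.eval]

end TermRecording

theorem entails_of_entails_exN_topRev {F G : Fml} {σ : ℕ → Tm} (hg : GroundSub σ)
    (hdomF : ∀ x ∈ domS σ, x ∉ F.varsSet) {xs : List ℕ} (hxs : ∀ x ∈ domS σ, x ∈ xs)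
    (h : Entails (exN xs (F.topRev σ)) G) : Entails F G := by
  classical
  intro D hD I a hF
  refine h D hD I a ((holds_exN_iff I _ xs a).mpr
    ⟨fun y => if y ∈ domS σ then Tm.eval I a (σ y) else a y, fun y hy => ?_, ?_⟩)
  · exact if_neg fun hyd => hy (hxs y hyd)
  · exact (Fml.holds_topRev_iff I hg hdomF (fun x hx => if_pos hx) fun y hy => if_neg hy).mpr hF

theorem entails_exN_topRev_of_entails {F G : Fml} {σ : ℕ → Tm}
    (hflatF : ∀ t ∈ F.pargs, flatTm t) (hflatG : ∀ t ∈ G.pargs, flatTm t)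
    (hinj : InjSub σ) (hg : GroundSub σ) (hdisj : rngS σ ∩ G.gargs = ∅)
    (hdomF : ∀ x ∈ domS σ, x ∉ F.varsSet) (hdomG : ∀ x ∈ domS σ, x ∉ G.varsSet)
    {xs : List ℕ} (hxs : ∀ x ∈ xs, x ∈ domS σ) (h : Entails F G) :
    Entails (exN xs (F.topRev σ)) G := by
  classical
  intro D hD I a hex
  obtain ⟨e, hea, he⟩ := (holds_exN_iff I _ xs a).mp hex
  let b : ℕ → D × Tm := fun y => (e y, .var y)
  let b' : ℕ → D × Tm := fun y => if y ∈ domS σ then (Tm.eval I e (σ y), σ y) else b y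
  have hb : decode σ e ∘ b = e :=
    funext fun y => decode_of_notMem (var_notMem_rngS hg y)
  have hb' : decode σ e ∘ b' = e := funext fun y => by
    by_cases hy : y ∈ domS σ
    · simp [b', hy, decode_of_mem_domS hinj hy]
    · simpa [b', hy] using congrFun hb y
  have hJF : F.holds (I.withTerms (decode σ e)) b := by
    rw [← Fml.holds_topRev_iff _ hg hdomF (b' := b')
        (fun x hx => by simp [b', hx, Tm.eval_withTerms_of_vars_eq_nil I _ (hg x hx) b e])
        (fun y hy => if_neg hy),
      Fml.holds_iff_of_surjective I (I.withTerms _) _ (decode_surjective hg) (fun _ _ => Iff.rfl)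
        (fun t ht => ?_), hb']
    · exact he
    · obtain ⟨u, hu, rfl⟩ := Fml.mem_pargs_topRev ht
      exact decode_eval_withTerms I (flatTm_topRevTm (hflatF u hu)) (topRevTm_notMem_rngS hg u)
  have hJG : G.holds (I.withTerms (decode σ e)) b := h _ ⟨(hD.some, .var 0)⟩ _ b hJF
  rw [Fml.holds_iff_of_surjective I (I.withTerms _) _ (decode_surjective hg) (fun _ _ => Iff.rfl)
    (fun t ht => decode_eval_withTerms I (hflatG t ht) ?_), hb] at hJG
  · exact (Fml.holds_congr_s13 I fun y hy => hea y fun hyx => hdomG y (hxs y hyx) hy).mp hJG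
  · rcases hflatG t ht with hgr | ⟨y, rfl⟩
    · exact fun hr => (hdisj.subset ⟨hr, ht, hgr⟩ : t ∈ (∅ : Set Tm))
    · exact var_notMem_rngS hg y

theorem inessential_quantifications_terms_general (F G : Fml) (σ : ℕ → Tm)
    (hflatF : ∀ t ∈ F.pargs, flatTm t)
    (hflatG : ∀ t ∈ G.pargs, flatTm t)
    (hinj : InjSub σ) (hg : GroundSub σ)
    (hdisj : rngS σ ∩ G.gargs = ∅)
    (hdomF : ∀ x ∈ domS σ, x ∉ F.varsSet)
    (hdomG : ∀ x ∈ domS σ, x ∉ G.varsSet)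
    (xs : List ℕ) (hxs : ∀ x : ℕ, x ∈ xs ↔ x ∈ domS σ) :
    Entails (exN xs (F.topRev σ)) G ↔ Entails F G :=
  ⟨entails_of_entails_exN_topRev hg hdomF fun x => (hxs x).mpr,
    entails_exN_topRev_of_entails hflatF hflatG hinj hg hdisj hdomF hdomG fun x => (hxs x).mp⟩

/-- Inessential quantifications in entailments for terms. -/
theorem inessential_quantifications_terms (F G : Fml) (σ : ℕ → Tm)
    (hflatF : ∀ t ∈ F.pargs, flatTm t)
    (hflatG : ∀ t ∈ G.pargs, flatTm t)
    (hinj : InjSub σ) (hg : GroundSub σ)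
    (hrng : rngS σ ⊆ F.gargs)
    (hdisj : rngS σ ∩ G.gargs = ∅)
    (hdomF : ∀ x ∈ domS σ, x ∉ F.varsSet)
    (hdomG : ∀ x ∈ domS σ, x ∉ G.varsSet)
    (xs : List ℕ) (hxs : ∀ x : ℕ, x ∈ xs ↔ x ∈ domS σ) :
    Entails (exN xs (F.topRev σ)) G ↔ Entails F G :=
  inessential_quantifications_terms_general F G σ hflatF hflatG hinj hg hdisj hdomF hdomG xs hxs

end CTI
end
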